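/- arXiv:1310.1544 — 7 statements merged into one kernel-verified Lean document; each statement's English description precedes it below -/
import Mathlib

section
/- Let p be an odd prime and S a nondegenerate symmetric m×m matrix over F_p with m even. For any nonzero c in F_p, the number of row vectors x in F_p^m with x S xᵀ = c equals p^{m/2-1}(p^{m/2} - χ(S)), where χ(S) = legendreSym p ((-1)^{m/2} det S). -/
/-!
Over a field of odd characteristic `S` is congruent to a diagonal matrix `diag w`, with
`∏ w = det S` up to a nonzero square, so it suffices to count solutions of `∑ wᵢ xᵢ² = c`.
For a primitive additive character `ψ`, `p N = ∑ₜ ∑ₓ ψ(t (∑ wᵢ xᵢ² - c))`. For `t ≠ 0` the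
inner sum factors into one-variable sums `∑ᵤ ψ(t wᵢ u²) = χ(t wᵢ) g` with `g` the quadratic
Gauss sum, and `g² = χ(-1) p` turns their product into `χ((-1)^(m/2) det S) p^(m/2)`; the term
`t = 0` gives `p^m`, and `∑_{t ≠ 0} ψ(-t c) = -1`.
-/

open Matrix Finset

theorem AddChar.map_sum_eq_prod {A M : Type*} [AddCommMonoid A] [CommMonoid M] (ψ : AddChar A M)
    {ι : Type*} (s : Finset ι) (f : ι → A) : ψ (∑ i ∈ s, f i) = ∏ i ∈ s, ψ (f i) :=
  map_prod ψ.toMonoidHom (fun i => Multiplicative.ofAdd (f i)) s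

namespace Matrix

theorem exists_isUnit_det_transpose_mul_mul_eq_diagonal {K ι : Type*} [Field K]
    [Invertible (2 : K)] [Fintype ι] [DecidableEq ι] {S : Matrix ι ι K} (hS : S.IsSymm) :
    ∃ (P : Matrix ι ι K) (w : ι → K), IsUnit P.det ∧ Pᵀ * S * P = diagonal w := by
  obtain ⟨v, hv⟩ := LinearMap.BilinForm.exists_orthogonal_basis
    (LinearMap.BilinForm.isSymm_iff.mp (Matrix.isSymm_toBilin'_iff_isSymm.mpr hS))
  let b := v.reindex (v.indexEquiv (Pi.basisFun K ι))
  have := (Pi.basisFun K ι).invertibleToMatrix b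
  refine ⟨(Pi.basisFun K ι).toMatrix b, fun i => S.toBilin' (b i) (b i),
    isUnit_det_of_invertible _, ?_⟩
  have hcongr := LinearMap.BilinForm.toMatrix_mul_basis_toMatrix (Pi.basisFun K ι) b S.toBilin'
  rw [LinearMap.BilinForm.toMatrix_basisFun, LinearMap.BilinForm.toMatrix'_toBilin'] at hcongr
  rw [hcongr]
  ext i j
  rcases eq_or_ne i j with rfl | hij
  · simp
  · simp only [LinearMap.BilinForm.toMatrix_apply, diagonal_apply_ne _ hij, b,
      Module.Basis.reindex_apply]
    exact hv (by simpa using hij)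

theorem card_dotProduct_transpose_mul_mul_mulVec {R ι : Type*} [CommRing R] [Fintype R]
    [DecidableEq R] [Fintype ι] [DecidableEq ι] (S : Matrix ι ι R) {P : Matrix ι ι R}
    (hP : IsUnit P.det) (c : R) :
    Fintype.card {x : ι → R // x ⬝ᵥ (Pᵀ * S * P) *ᵥ x = c} =
      Fintype.card {x : ι → R // x ⬝ᵥ S *ᵥ x = c} := by
  refine Fintype.card_congr <|
    (toLinearEquiv' P (P.invertibleOfIsUnitDet hP)).toEquiv.subtypeEquiv fun x => ?_
  change _ ↔ (P *ᵥ x) ⬝ᵥ S *ᵥ (P *ᵥ x) = c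
  rw [← mulVec_mulVec, ← mulVec_mulVec, dotProduct_mulVec, vecMul_transpose]

theorem dotProduct_diagonal_mulVec_self {R ι : Type*} [CommRing R] [Fintype ι] [DecidableEq ι]
    (w x : ι → R) : x ⬝ᵥ diagonal w *ᵥ x = ∑ i, w i * x i ^ 2 := by
  simp only [dotProduct, mulVec_diagonal]
  exact Finset.sum_congr rfl fun i _ => by ring

end Matrix

section CharacterSums

variable {F R : Type*} [Field F] [Fintype F] [DecidableEq F] [CommRing R] [IsDomain R]
  {ψ : AddChar F R}

theorem AddChar.card_mul_card_fiber_eq_sum (hψ : ψ.IsPrimitive) {α : Type*} [Fintype α]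
    (f : α → F) (c : F) :
    (Fintype.card F : R) * Fintype.card {x // f x = c} = ∑ t, ∑ x, ψ (t * (f x - c)) := by
  rw [Finset.sum_comm, Fintype.card_subtype, Finset.card_filter]
  push_cast
  rw [Finset.mul_sum]
  refine Finset.sum_congr rfl fun x _ => ?_
  simp only [AddChar.sum_mulShift _ hψ, sub_eq_zero]
  split_ifs <;> simp

theorem sum_addChar_mul_sq (hF : ringChar F ≠ 2) (hψ : ψ.IsPrimitive) {a : F} (ha : a ≠ 0) :
    ∑ u, ψ (a * u ^ 2) =
      quadraticChar F a * gaussSum ((quadraticChar F).ringHomComp (Int.castRingHom R)) ψ := by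
  set χ := (quadraticChar F).ringHomComp (Int.castRingHom R)
  have hχ : χ.IsQuadratic := (quadraticChar_isQuadratic F).comp _
  have hcard (s : F) : (#{u : F | u ^ 2 = s} : R) = χ s + 1 := by
    have := quadraticChar_card_sqrts hF s
    rw [Set.toFinset_ofPred] at this
    simp only [χ, MulChar.ringHomComp_apply, Int.coe_castRingHom]
    rw [← Int.cast_natCast, this, Int.cast_add, Int.cast_one]
  calc ∑ u, ψ (a * u ^ 2)
      = ∑ s, (#{u : F | u ^ 2 = s} : R) * ψ (a * s) := by
        rw [← Finset.sum_fiberwise univ (fun u : F => u ^ 2)]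
        refine Finset.sum_congr rfl fun s _ => ?_
        rw [Finset.sum_congr rfl fun u hu => by rw [(Finset.mem_filter.mp hu).2],
          Finset.sum_const, nsmul_eq_mul]
    _ = gaussSum χ (ψ.mulShift a) + ∑ s, ψ (s * a) := by
        simp only [hcard, add_mul, one_mul, Finset.sum_add_distrib, gaussSum,
          AddChar.mulShift_apply, mul_comm a]
    _ = χ a * gaussSum χ ψ := by
        rw [AddChar.sum_mulShift _ hψ, if_neg ha, Nat.cast_zero, add_zero,
          show a = (Units.mk0 a ha : F) from rfl, gaussSum_mulShift_eq, hχ.inv]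

theorem sum_addChar_sum_mul_sq [CharZero R] (hF : ringChar F ≠ 2) (hψ : ψ.IsPrimitive)
    {ι : Type*} [Fintype ι] [DecidableEq ι] {a : ι → F} (ha : ∀ i, a i ≠ 0) {k : ℕ}
    (hk : Fintype.card ι = 2 * k) :
    ∑ x : ι → F, ψ (∑ i, a i * x i ^ 2) =
      quadraticChar F ((-1) ^ k * ∏ i, a i) * (Fintype.card F : R) ^ k := by
  set χ := (quadraticChar F).ringHomComp (Int.castRingHom R)
  have hg : gaussSum χ ψ ^ 2 = χ (-1) * Fintype.card F :=
    gaussSum_sq ((MulChar.ringHomComp_ne_one_iff Int.cast_injective).mpr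
      (quadraticChar_ne_one hF)) ((quadraticChar_isQuadratic F).comp _) hψ
  calc ∑ x : ι → F, ψ (∑ i, a i * x i ^ 2)
      = ∏ i, ∑ u, ψ (a i * u ^ 2) := by
        simp only [AddChar.map_sum_eq_prod, Fintype.prod_sum]
    _ = χ (∏ i, a i) * (gaussSum χ ψ ^ 2) ^ k := by
        simp only [sum_addChar_mul_sq hF hψ (ha _), Finset.prod_mul_distrib, Finset.prod_const,
          Finset.card_univ, hk, pow_mul, map_prod]
        rfl
    _ = quadraticChar F ((-1) ^ k * ∏ i, a i) * (Fintype.card F : R) ^ k := by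
        rw [hg, mul_pow, ← map_pow, ← mul_assoc, mul_comm (χ _), ← map_mul]
        rfl

theorem card_mul_card_sum_mul_sq_eq [CharZero R] (hF : ringChar F ≠ 2) (hψ : ψ.IsPrimitive)
    {ι : Type*} [Fintype ι] [DecidableEq ι] {a : ι → F} (ha : ∀ i, a i ≠ 0) {k : ℕ}
    (hk : Fintype.card ι = 2 * k) {c : F} (hc : c ≠ 0) :
    (Fintype.card F : R) * Fintype.card {x : ι → F // ∑ i, a i * x i ^ 2 = c} =
      (Fintype.card F : R) ^ (2 * k) -
        quadraticChar F ((-1) ^ k * ∏ i, a i) * (Fintype.card F : R) ^ k := by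
  set q := (Fintype.card F : R)
  set ε := (quadraticChar F ((-1) ^ k * ∏ i, a i) : R)
  have hterm (t : F) (ht : t ≠ 0) :
      ∑ x : ι → F, ψ (t * (∑ i, a i * x i ^ 2 - c)) = ψ (t * -c) * (ε * q ^ k) := by
    have hprod : ∏ i, t * a i = (t ^ k) ^ 2 * ∏ i, a i := by
      rw [Finset.prod_mul_distrib, Finset.prod_const, Finset.card_univ, hk, ← pow_mul, mul_comm k]
    have := sum_addChar_sum_mul_sq (ψ := ψ) hF hψ (fun i => mul_ne_zero ht (ha i)) hk
    rw [hprod, mul_left_comm, map_mul, quadraticChar_sq_one' (pow_ne_zero _ ht), one_mul] at this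
    rw [← this, Finset.mul_sum]
    refine Finset.sum_congr rfl fun x _ => ?_
    rw [← AddChar.map_add_eq_mul]
    simp only [mul_assoc, ← Finset.mul_sum]
    congr 1
    ring
  -- Split off `t = 0`; the remaining terms add up to `ε q ^ k ∑_{t ≠ 0} ψ (-t c) = -ε q ^ k`.
  rw [AddChar.card_mul_card_fiber_eq_sum hψ, ← Finset.add_sum_erase _ _ (mem_univ 0),
    Finset.sum_congr rfl fun t ht => hterm t (ne_of_mem_erase ht), ← Finset.sum_mul,
    Finset.sum_erase_eq_sub (mem_univ 0), AddChar.sum_mulShift _ hψ, if_neg (neg_ne_zero.mpr hc)]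
  simp [q, hk, pow_mul]
  ring

theorem card_mul_card_dotProduct_mulVec_eq [CharZero R] (hF : ringChar F ≠ 2)
    (hψ : ψ.IsPrimitive) {ι : Type*} [Fintype ι] [DecidableEq ι] {S : Matrix ι ι F}
    (hS : S.IsSymm) (hSdet : IsUnit S.det) {k : ℕ} (hk : Fintype.card ι = 2 * k) {c : F}
    (hc : c ≠ 0) :
    (Fintype.card F : R) * Fintype.card {x : ι → F // x ⬝ᵥ S *ᵥ x = c} =
      (Fintype.card F : R) ^ (2 * k) -
        quadraticChar F ((-1) ^ k * S.det) * (Fintype.card F : R) ^ k := by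
  have : Invertible (2 : F) := invertibleOfNonzero (Ring.two_ne_zero hF)
  obtain ⟨P, w, hP, hPSP⟩ := exists_isUnit_det_transpose_mul_mul_eq_diagonal hS
  have hdet : ∏ i, w i = P.det ^ 2 * S.det := by
    rw [← det_diagonal, ← hPSP, det_mul, det_mul, det_transpose]
    ring
  have hw (i : ι) : w i ≠ 0 := fun hi =>
    ((hP.pow 2).mul hSdet).ne_zero (hdet ▸ Finset.prod_eq_zero (mem_univ i) hi)
  rw [← card_dotProduct_transpose_mul_mul_mulVec S hP, hPSP]
  simp_rw [dotProduct_diagonal_mulVec_self]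
  rw [card_mul_card_sum_mul_sq_eq hF hψ hw hk hc, hdet, mul_left_comm, map_mul,
    quadraticChar_sq_one' hP.ne_zero, one_mul]

end CharacterSums

/-- Lemma 5.1 (1.1), last clause: for `p` an odd prime, `S` a nondegenerate symmetric
`m × m` matrix over `F_p` with `m` even, and `c ≠ 0`, the number of row vectors `x`
with `x S xᵀ = c` equals `p^(m/2-1) (p^(m/2) - χ(S))` with
`χ(S) = ((-1)^(m/2) det S / p)`. -/
theorem card_repr_even_rank (p m : ℕ) [Fact p.Prime] (hp : p ≠ 2) (hm : Even m)
    (hm0 : 0 < m) (S : Matrix (Fin m) (Fin m) (ZMod p)) (hS : Sᵀ = S)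
    (hSdet : IsUnit S.det) (c : ZMod p) (hc : c ≠ 0) :
    (Fintype.card {x : Fin m → ZMod p // dotProduct x (S.mulVec x) = c} : ℤ) =
      (p : ℤ) ^ (m / 2 - 1) *
        ((p : ℤ) ^ (m / 2) - legendreSym p (((-1 : ZMod p) ^ (m / 2) * S.det).val)) := by
  obtain ⟨k, rfl⟩ := hm
  obtain ⟨j, rfl⟩ : ∃ j, k = j + 1 := ⟨k - 1, by omega⟩
  have hF : ringChar (ZMod p) ≠ 2 := by rwa [ZMod.ringChar_zmod_n]
  have hcount := card_mul_card_dotProduct_mulVec_eq (R := ℂ) hF (ZMod.isPrimitive_stdAddChar p)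
    hS hSdet (k := j + 1) (by rw [Fintype.card_fin]; ring) hc
  have hleg (a : ZMod p) : legendreSym p a.val = quadraticChar (ZMod p) a := by
    simp [legendreSym]
  rw [ZMod.card] at hcount
  rw [show (j + 1 + (j + 1)) / 2 = j + 1 by omega, hleg, Nat.add_sub_cancel]
  apply mul_left_cancel₀ (Int.natCast_ne_zero.mpr (Fact.out : p.Prime).ne_zero)
  apply Int.cast_injective (α := ℂ)
  push_cast
  rw [hcount]
  ring
end

section
/- Let p be an odd prime, η a multiplicative character of F_p with η(0)=0 and η² nontrivial, S an invertible symmetric matrix over F_p of odd rank r (i.e., S is r×r invertible, embedded as S ⊕ 0_{l-r} in size l), c ∈ F_p, and d ∈ F_p^×. Then Σ_{w ∈ F_p^l} η((S⊕0)[wᵀ] + cd) = η(d) φ(d)^r · Σ_{w ∈ F_p^l} η((S⊕0)[wᵀ] + c), where φ is the quadratic character. -/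
/-! Diagonalising `S₀` reduces the claim to a diagonal form `Q = ∑ uᵢ xᵢ²` of odd rank. Adding a
variable `u x²` convolves the representation numbers `N(a) = #{x | Q x = a}` with `1 + φ(a / u)`,
and by induction `N(a) = C + K φ(a)` in odd rank, `N(a) = C + K [a = 0]` in even rank (the step
from odd to even rank is the classical evaluation of `∑ₓ φ(a - u x²)`). Hence
`∑ₓ η(Q x + c) = ∑ₐ N(a) η(a + c) = K ∑ₐ φ(a) η(a + c)` because `η ≠ 1`, and substituting
`a ↦ d a` produces the factor `η(d) φ(d)`. The zero block only contributes a factor `p ^ k`, and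
`φ(d) ^ r = φ(d)` for odd `r`. -/

open Matrix

/-- The quadratic character of `ZMod p` with values in `ℂ`. -/
noncomputable def quadCharC (p : ℕ) [Fact p.Prime] : MulChar (ZMod p) ℂ :=
  (quadraticChar (ZMod p)).ringHomComp (Int.castRingHom ℂ)

open Finset

theorem sum_comp_eq_sum_card_fiber_smul {ι κ M : Type*} [Fintype ι] [Fintype κ] [DecidableEq κ]
    [AddCommMonoid M] (g : ι → κ) (f : κ → M) :
    ∑ i, f (g i) = ∑ j, #{i | g i = j} • f j := by
  rw [← sum_fiberwise' univ g f]
  simp only [sum_const]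

theorem Matrix.dotProduct_fromBlocks_zero_mulVec {ι κ α : Type*} [Fintype ι] [Fintype κ]
    [NonUnitalNonAssocSemiring α] (A : Matrix ι ι α) (w : ι ⊕ κ → α) :
    w ⬝ᵥ fromBlocks A 0 0 0 *ᵥ w = (w ∘ Sum.inl) ⬝ᵥ A *ᵥ (w ∘ Sum.inl) := by
  simp [dotProduct, mulVec, Fintype.sum_sum_type, fromBlocks]

theorem sum_comp_inl_eq_card_smul_sum {ι κ α M : Type*} [Fintype ι] [Fintype κ] [Fintype α]
    [DecidableEq ι] [DecidableEq κ] [AddCommMonoid M] (g : (ι → α) → M) :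
    ∑ w : ι ⊕ κ → α, g (w ∘ Sum.inl) = Fintype.card (κ → α) • ∑ x, g x := by
  rw [← Equiv.sum_comp (Equiv.sumArrowEquivProdArrow ι κ α).symm, Fintype.sum_prod_type,
    smul_sum]
  refine sum_congr rfl fun x _ => ?_
  change ∑ _y : κ → α, g x = _
  rw [sum_const, card_univ]

section FiniteField

variable {F : Type*} [Field F] [Fintype F] [DecidableEq F]

theorem sum_apply_sq (hF : ringChar F ≠ 2) (f : F → ℤ) :
    ∑ x, f (x ^ 2) = ∑ b, (quadraticChar F b + 1) * f b := by
  rw [sum_comp_eq_sum_card_fiber_smul]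
  refine sum_congr rfl fun b _ => ?_
  rw [nsmul_eq_mul, ← quadraticChar_card_sqrts hF b, Set.toFinset_ofPred]

theorem quadraticChar_inv_apply (a : F) : quadraticChar F a⁻¹ = quadraticChar F a := by
  rw [← MulChar.inv_apply', (quadraticChar_isQuadratic F).inv]

theorem sum_quadraticChar_sub_mul_sq (hF : ringChar F ≠ 2) {u a : F} (hu : u ≠ 0) (ha : a ≠ 0) :
    ∑ x, quadraticChar F (a - u * x ^ 2) = -quadraticChar F (-u) := by
  have hlin : ∑ b, quadraticChar F (a - u * b) = 0 := by
    rw [← quadraticChar_sum_zero hF]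
    exact Fintype.sum_equiv ((Equiv.mulLeft₀ u hu).trans (Equiv.subLeft a)) _ _ fun _ => rfl
  have hsq : quadraticChar F a * quadraticChar F a = 1 := by
    rw [← sq, quadraticChar_sq_one ha]
  rw [sum_apply_sq hF fun b => quadraticChar F (a - u * b)]
  simp only [add_mul, one_mul, sum_add_distrib, hlin, add_zero]
  rw [← Equiv.sum_comp (Equiv.mulLeft₀ (u⁻¹ * a) (by simp [hu, ha]))]
  calc ∑ t, quadraticChar F (u⁻¹ * a * t) * quadraticChar F (a - u * (u⁻¹ * a * t))
      = ∑ t, quadraticChar F u⁻¹ * (quadraticChar F a * quadraticChar F a) *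
          (quadraticChar F t * quadraticChar F (1 - t)) := by
        refine sum_congr rfl fun t _ => ?_
        rw [show a - u * (u⁻¹ * a * t) = a * (1 - t) by field_simp]
        simp only [map_mul]
        ring
    _ = quadraticChar F u * jacobiSum (quadraticChar F) (quadraticChar F)⁻¹ := by
        rw [← mul_sum, hsq, mul_one, quadraticChar_inv_apply, (quadraticChar_isQuadratic F).inv]
        rfl
    _ = -quadraticChar F (-u) := by
        rw [jacobiSum_nontrivial_inv (quadraticChar_ne_one hF), neg_eq_neg_one_mul u, map_mul]
        ring

theorem exists_sum_sub_mul_sq_eq_quadraticChar_of_eq_ite (hF : ringChar F ≠ 2) {u : F}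
    (hu : u ≠ 0) {f : F → ℤ} {C K : ℤ} (hf : ∀ a, f a = C + K * if a = 0 then 1 else 0) :
    ∃ C' K' : ℤ, ∀ a, ∑ x, f (a - u * x ^ 2) = C' + K' * quadraticChar F a := by
  refine ⟨Fintype.card F * C + K, K * quadraticChar F u, fun a => ?_⟩
  have hroots : #{x | a - u * x ^ 2 = 0} = #{x | x ^ 2 = u⁻¹ * a} := by
    congr 1; ext x; simp [sub_eq_zero, eq_comm (a := a), eq_inv_mul_iff_mul_eq₀ hu]
  have hcard := quadraticChar_card_sqrts hF (u⁻¹ * a)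
  rw [Set.toFinset_ofPred, ← hroots] at hcard
  simp only [hf, sum_add_distrib, sum_const, card_univ, nsmul_eq_mul, ← mul_sum, sum_boole,
    hcard, map_mul, quadraticChar_inv_apply]
  ring

theorem exists_sum_sub_mul_sq_eq_ite_of_eq_quadraticChar (hF : ringChar F ≠ 2) {u : F}
    (hu : u ≠ 0) {f : F → ℤ} {C K : ℤ} (hf : ∀ a, f a = C + K * quadraticChar F a) :
    ∃ C' K' : ℤ, ∀ a, ∑ x, f (a - u * x ^ 2) = C' + K' * if a = 0 then 1 else 0 := by
  refine ⟨Fintype.card F * C - K * quadraticChar F (-u),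
    K * (∑ x, quadraticChar F (0 - u * x ^ 2) + quadraticChar F (-u)), fun a => ?_⟩
  simp only [hf, sum_add_distrib, sum_const, card_univ, nsmul_eq_mul, ← mul_sum]
  by_cases ha : a = 0
  · subst ha; rw [if_pos rfl]; ring
  · rw [sum_quadraticChar_sub_mul_sq hF hu ha, if_neg ha]; ring

open QuadraticMap in
theorem card_weightedSumSquares_fiber_succ {n : ℕ} (u : Fin (n + 1) → Fˣ) (a : F) :
    #{v | weightedSumSquares F u v = a} =
      ∑ x, #{v | weightedSumSquares F (Fin.tail u) v = a - u 0 * x ^ 2} := by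
  simp only [card_filter]
  rw [← Equiv.sum_comp (Fin.consEquiv fun _ => F), Fintype.sum_prod_type]
  refine sum_congr rfl fun x _ => sum_congr rfl fun v _ => ?_
  simp only [Fin.consEquiv_apply, weightedSumSquares_apply, Fin.sum_univ_succ, Fin.cons_zero,
    Fin.cons_succ, Fin.tail, Units.smul_def, smul_eq_mul, eq_sub_iff_add_eq', _root_.sq]

open QuadraticMap in
theorem exists_card_weightedSumSquares_fiber_eq (hF : ringChar F ≠ 2) :
    ∀ {n : ℕ} (u : Fin n → Fˣ),
      (Even n → ∃ C K : ℤ, ∀ a,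
        (#{v | weightedSumSquares F u v = a} : ℤ) = C + K * if a = 0 then 1 else 0) ∧
      (Odd n → ∃ C K : ℤ, ∀ a,
        (#{v | weightedSumSquares F u v = a} : ℤ) = C + K * quadraticChar F a)
  | 0, u => by
    refine ⟨fun _ => ⟨0, 1, fun a => ?_⟩, fun h => absurd h Nat.not_odd_zero⟩
    by_cases ha : a = 0 <;> simp [ha, weightedSumSquares_apply, eq_comm]
  | n + 1, u => by
    have hsucc (a : F) := congrArg (Nat.cast : ℕ → ℤ) (card_weightedSumSquares_fiber_succ u a)
    push_cast at hsucc
    obtain ⟨ih_even, ih_odd⟩ := exists_card_weightedSumSquares_fiber_eq hF (Fin.tail u)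
    refine ⟨fun h => ?_, fun h => ?_⟩
    · obtain ⟨C, K, hCK⟩ := ih_odd (Nat.even_add_one.mp h |> Nat.not_even_iff_odd.mp)
      simpa only [hsucc] using
        exists_sum_sub_mul_sq_eq_ite_of_eq_quadraticChar hF (u 0).ne_zero hCK
    · obtain ⟨C, K, hCK⟩ := ih_even (Nat.odd_add_one.mp h |> Nat.not_odd_iff_even.mp)
      simpa only [hsucc] using
        exists_sum_sub_mul_sq_eq_quadraticChar_of_eq_ite hF (u 0).ne_zero hCK

open QuadraticMap in
theorem exists_card_dotProduct_mulVec_fiber_eq (hF : ringChar F ≠ 2) {ι : Type*} [Fintype ι]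
    [DecidableEq ι] {S : Matrix ι ι F} (hS : Sᵀ = S) (hdet : IsUnit S.det)
    (hodd : Odd (Fintype.card ι)) :
    ∃ C K : ℤ, ∀ a, (#{x | x ⬝ᵥ S *ᵥ x = a} : ℤ) = C + K * quadraticChar F a := by
  have : Invertible (2 : F) := invertibleOfNonzero (Ring.two_ne_zero hF)
  have hQ (x : ι → F) : S.toQuadraticForm' x = x ⬝ᵥ S *ᵥ x := toLinearMap₂'_apply' S x x
  have hsymm (x y : ι → F) : toLinearMap₂' F S x y = toLinearMap₂' F S y x := by
    rw [toLinearMap₂'_apply', toLinearMap₂'_apply', dotProduct_mulVec, ← vecMul_transpose, hS,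
      dotProduct_comm]
  have hsep : (associated (R := F) S.toQuadraticForm').SeparatingLeft := by
    rw [toQuadraticForm', associated_left_inverse F hsymm,
      LinearMap.separatingLeft_toLinearMap₂'_iff_det_ne_zero]
    exact hdet.ne_zero
  obtain ⟨u, ⟨e⟩⟩ := S.toQuadraticForm'.equivalent_weightedSumSquares_units_of_nondegenerate' hsep
  obtain ⟨C, K, hCK⟩ := (exists_card_weightedSumSquares_fiber_eq hF u).2
    (by rwa [Module.finrank_fintype_fun_eq_card])
  refine ⟨C, K, fun a => ?_⟩
  rw [← hCK a, card_equiv e.toLinearEquiv.toEquiv fun x => ?_]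
  simp only [mem_filter_univ, ← hQ]
  exact (e.map_app x).symm ▸ Iff.rfl

theorem sum_mulChar_add_mul_eq_of_card_fiber {V R : Type*} [Fintype V] [CommRing R] [IsDomain R]
    {η : MulChar F R} (hη : η ≠ 1) {f : V → F} {C K : ℤ}
    (hf : ∀ a, (#{v | f v = a} : ℤ) = C + K * quadraticChar F a) (c : F) {d : F} (hd : d ≠ 0) :
    ∑ v, η (f v + c * d) = η d * quadraticChar F d * ∑ v, η (f v + c) := by
  have hreduce (c' : F) : ∑ v, η (f v + c') = K * ∑ a, quadraticChar F a * η (a + c') := by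
    have hshift : ∑ a, η (a + c') = 0 := by
      rw [Fintype.sum_equiv (Equiv.addRight c') (fun a => η (a + c')) η fun _ => rfl]
      exact MulChar.sum_eq_zero_of_ne_one hη
    calc ∑ v, η (f v + c') = ∑ a, #{v | f v = a} • η (a + c') :=
          sum_comp_eq_sum_card_fiber_smul f fun a => η (a + c')
      _ = ∑ a, ((C : R) * η (a + c') + K * (quadraticChar F a * η (a + c'))) := by
          refine sum_congr rfl fun a _ => ?_
          rw [← Nat.cast_smul_eq_nsmul ℤ, hf, zsmul_eq_mul]
          push_cast
          ring
      _ = K * ∑ a, quadraticChar F a * η (a + c') := by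
          rw [sum_add_distrib, ← mul_sum, ← mul_sum, hshift, mul_zero, zero_add]
  have hscale : ∑ a, quadraticChar F a * η (a + c * d) =
      η d * quadraticChar F d * ∑ b, quadraticChar F b * η (b + c) := by
    rw [mul_sum]
    refine (Fintype.sum_equiv (Equiv.mulLeft₀ d hd) _ _ fun b => ?_).symm
    change _ = (quadraticChar F (d * b) : R) * η (d * b + c * d)
    rw [show d * b + c * d = d * (b + c) by ring, map_mul, map_mul]
    push_cast
    ring
  rw [hreduce, hreduce, hscale]
  ring

end FiniteField

/-- Corollary to Lemma 5.3 (scaling relation): for `p` an odd prime, `η` a multiplicative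
character with `η² ≠ 1`, `S = S₀ ⊕ O` with `S₀` invertible symmetric of odd size `r`,
`c ∈ F_p` and `d ∈ F_p^×`, one has `I_{η,S,cd} = η(d) φ(d)^r I_{η,S,c}`. -/
theorem charSum_quadForm_scale (p r k : ℕ) [Fact p.Prime] (hp : p ≠ 2)
    (η : MulChar (ZMod p) ℂ) (hη : η ^ 2 ≠ 1) (hr : Odd r)
    (S₀ : Matrix (Fin r) (Fin r) (ZMod p)) (hS₀ : S₀ᵀ = S₀) (hS₀det : IsUnit S₀.det)
    (c : ZMod p) (d : ZMod p) (hd : d ≠ 0) :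
    (∑ w : Fin r ⊕ Fin k → ZMod p,
        η (dotProduct w ((Matrix.fromBlocks S₀ 0 0 0).mulVec w) + c * d)) =
      η d * (quadCharC p d) ^ r *
        ∑ w : Fin r ⊕ Fin k → ZMod p,
          η (dotProduct w ((Matrix.fromBlocks S₀ 0 0 0).mulVec w) + c) := by
  have hF : ringChar (ZMod p) ≠ 2 := by rwa [ZMod.ringChar_zmod_n]
  have hη₁ : η ≠ 1 := by rintro rfl; exact hη (one_pow 2)
  obtain ⟨C, K, hfiber⟩ :=
    exists_card_dotProduct_mulVec_fiber_eq hF hS₀ hS₀det (by rwa [Fintype.card_fin])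
  have hφ : quadCharC p d ^ r = quadraticChar (ZMod p) d := by
    rw [← MulChar.pow_apply' _ hr.pos.ne', quadCharC,
      ((quadraticChar_isQuadratic _).comp _).pow_odd hr]
    rfl
  have hsplit (c' : ZMod p) :
      ∑ w : Fin r ⊕ Fin k → ZMod p, η (w ⬝ᵥ fromBlocks S₀ 0 0 0 *ᵥ w + c') =
        Fintype.card (Fin k → ZMod p) • ∑ x, η (x ⬝ᵥ S₀ *ᵥ x + c') := by
    simp only [dotProduct_fromBlocks_zero_mulVec]
    exact sum_comp_inl_eq_card_smul_sum fun x => η (x ⬝ᵥ S₀ *ᵥ x + c')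
  rw [hsplit, hsplit, hφ, sum_mulChar_add_mul_eq_of_card_fiber hη₁ hfiber c hd, mul_smul_comm]
end

section
/- Let p be an odd prime, η a multiplicative character of F_p with η(0)=0 and η² nontrivial, and l an odd integer ≥ 1. For Z₁ a symmetric (l-1)×(l-1) matrix over F_p and z ∈ F_p, the sum over w ∈ F_p^{l-1} of η(det [[Z₁, w],[wᵀ, z]]) equals p^{(l-1)/2} · φ((-1)^{(l-1)/2} det Z₁) · η(det Z₁ · z), where φ is the quadratic character. -/
/-!
Over a field of odd characteristic the symmetric matrix `Z` is congruent to a diagonal one,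
`Uᵀ Z U = diag d`, and substituting `w ↦ Uᵀ w` shows that a congruence multiplies the sum by
`η (det U) ^ 2`, exactly as it multiplies the right-hand side. If some `d i = 0`, rescaling the
`i`-th coordinate by an `a` with `η a ^ 2 ≠ 1` fixes `diag d`, so the sum vanishes. Otherwise the
Schur complement gives `det = (∏ d) (z - ∑ dᵢ⁻¹ wᵢ²)`, and the coordinates are summed out in pairs:
`a x² + b y² = u` has `q - φ(-ab)` solutions for `u ≠ 0` and `q - φ(-ab) + q φ(-ab)` for `u = 0`
(a Jacobi sum computation), so since `∑ₜ η (α - t) = 0` each pair contributes `q φ(-ab)`.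
-/

open Matrix

open Finset

theorem Fintype.sum_fin_succ_pi {β M : Type*} [Fintype β] [AddCommMonoid M] {n : ℕ}
    (f : (Fin (n + 1) → β) → M) : ∑ w, f w = ∑ x, ∑ w, f (Fin.cons x w) := by
  rw [← (Fin.consEquiv fun _ => β).sum_comp, Fintype.sum_prod_type]
  rfl

theorem MulChar.sum_apply_sub_eq_zero {R S : Type*} [CommRing R] [Fintype R] [CommRing S]
    [IsDomain S] {χ : MulChar R S} (hχ : χ ≠ 1) (α : R) : ∑ t, χ (α - t) = 0 :=
  (Fintype.sum_equiv (Equiv.subLeft α) _ _ fun _ => rfl).trans (MulChar.sum_eq_zero_of_ne_one hχ)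

section BorderedMatrix

variable {n R : Type*} [Fintype n] [DecidableEq n] [CommRing R]

def borderedMatrix (Z : Matrix n n R) (w : n → R) (z : R) : Matrix (n ⊕ Unit) (n ⊕ Unit) R :=
  fromBlocks Z (replicateCol Unit w) (replicateRow Unit w) (of fun _ _ => z)

omit [DecidableEq n] in
theorem fromBlocks_transpose_mul_borderedMatrix_mul (U Z : Matrix n n R) (w : n → R) (z : R) :
    fromBlocks Uᵀ 0 0 1 * borderedMatrix Z w z * fromBlocks U 0 0 1 =
      borderedMatrix (Uᵀ * Z * U) (Uᵀ *ᵥ w) z := by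
  simp [borderedMatrix, fromBlocks_multiply, ← replicateCol_mulVec, mulVec_transpose,
    replicateRow_vecMul]

theorem det_borderedMatrix_transpose_mul_mul (U Z : Matrix n n R) (w : n → R) (z : R) :
    (borderedMatrix (Uᵀ * Z * U) (Uᵀ *ᵥ w) z).det = U.det ^ 2 * (borderedMatrix Z w z).det := by
  rw [← fromBlocks_transpose_mul_borderedMatrix_mul, det_mul, det_mul, det_fromBlocks_zero₂₁,
    det_fromBlocks_zero₂₁, det_transpose, det_one]
  ring

theorem sum_det_borderedMatrix_transpose_mul_mul [Fintype R] {S : Type*} [CommSemiring S]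
    (η : MulChar R S) {U : Matrix n n R} (hU : IsUnit U.det) (Z : Matrix n n R) (z : R) :
    ∑ w, η (borderedMatrix (Uᵀ * Z * U) w z).det =
      η U.det ^ 2 * ∑ w, η (borderedMatrix Z w z).det := by
  have hbij : Function.Bijective (Uᵀ *ᵥ · : (n → R) → n → R) :=
    (mulVec_surjective_iff_isUnit.mpr
      ((isUnit_transpose U).mpr ((isUnit_iff_isUnit_det U).mpr hU))).bijective_of_finite
  rw [← hbij.sum_comp, mul_sum]
  simp only [det_borderedMatrix_transpose_mul_mul, map_mul, map_pow]

theorem sum_det_borderedMatrix_eq_zero_of_transpose_mul_mul_eq [Fintype R] {S : Type*}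
    [CommRing S] [IsDomain S] {η : MulChar R S} {U Z : Matrix n n R} (hU : IsUnit U.det)
    (hUZ : Uᵀ * Z * U = Z) (hηU : η U.det ^ 2 ≠ 1) (z : R) :
    ∑ w, η (borderedMatrix Z w z).det = 0 := by
  have h := sum_det_borderedMatrix_transpose_mul_mul η hU Z z
  rw [hUZ] at h
  exact (mul_eq_zero.mp (by linear_combination h : (1 - η U.det ^ 2) * _ = 0)).resolve_left
    (sub_ne_zero.mpr hηU.symm)

theorem det_borderedMatrix_diagonal {K : Type*} [Field K] {d : n → K} (hd : ∀ i, d i ≠ 0)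
    (w : n → K) (z : K) :
    (borderedMatrix (diagonal d) w z).det = (∏ i, d i) * (z - ∑ i, (d i)⁻¹ * w i ^ 2) := by
  have : Invertible (diagonal d) := invertibleOfIsUnitDet _ (by
    rw [det_diagonal]; exact isUnit_iff_ne_zero.mpr (prod_ne_zero_iff.mpr fun i _ => hd i))
  have hinv : ⅟(diagonal d) = diagonal fun i => (d i)⁻¹ := by
    refine invOf_eq_right_inv ?_
    rw [diagonal_mul_diagonal, ← diagonal_one]
    exact congrArg diagonal (funext fun i => mul_inv_cancel₀ (hd i))
  rw [borderedMatrix, det_fromBlocks₁₁, det_diagonal, hinv, det_unique]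
  congr 1
  simp only [Matrix.sub_apply, of_apply, mul_apply, replicateRow_apply, replicateCol_apply,
    diagonal_apply, mul_ite, mul_zero, sum_ite_eq', mem_univ, if_true]
  exact congrArg (z - ·) (sum_congr rfl fun j _ => by ring)

end BorderedMatrix

theorem Matrix.IsSymm.exists_isUnit_det_transpose_mul_mul_eq_diagonal {n K : Type*} [Fintype n]
    [DecidableEq n] [Field K] [Invertible (2 : K)] {Z : Matrix n n K} (hZ : Z.IsSymm) :
    ∃ U : Matrix n n K, IsUnit U.det ∧ ∃ d : n → K, Uᵀ * Z * U = diagonal d := by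
  obtain ⟨v, hv⟩ := LinearMap.BilinForm.exists_orthogonal_basis
    (LinearMap.BilinForm.isSymm_iff.mp (isSymm_toBilin'_iff_isSymm.mpr hZ))
  set b := v.reindex
    ((finCongr (Module.finrank_fintype_fun_eq_card K)).trans (Fintype.equivFin n).symm)
  have : Invertible ((Pi.basisFun K n).toMatrix b) := (Pi.basisFun K n).invertibleToMatrix b
  refine ⟨(Pi.basisFun K n).toMatrix b, isUnit_det_of_invertible _,
    fun i => Z.toBilin' (b i) (b i), ?_⟩
  calc ((Pi.basisFun K n).toMatrix b)ᵀ * Z * (Pi.basisFun K n).toMatrix b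
      = ((Pi.basisFun K n).toMatrix b)ᵀ *
          LinearMap.BilinForm.toMatrix (Pi.basisFun K n) Z.toBilin' *
          (Pi.basisFun K n).toMatrix b := by
        rw [LinearMap.BilinForm.toMatrix_basisFun, LinearMap.BilinForm.toMatrix'_toBilin']
    _ = LinearMap.BilinForm.toMatrix b Z.toBilin' :=
        LinearMap.BilinForm.toMatrix_mul_basis_toMatrix _ _ _
    _ = diagonal fun i => Z.toBilin' (b i) (b i) := by
        ext i j
        rw [LinearMap.BilinForm.toMatrix_apply, diagonal_apply]
        split_ifs with h
        · rw [h]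
        · simp only [b, Module.Basis.reindex_apply]
          exact hv ((Equiv.injective _).ne h)

section CharacterSums

variable {F : Type*} [Field F] [Fintype F] [DecidableEq F] {η : MulChar F ℂ}

local notation "φ" => MulChar.ringHomComp (quadraticChar F) (Int.castRingHom ℂ)
local notation "q" => (Fintype.card F : ℂ)

theorem isQuadratic_ringHomComp_quadraticChar : (φ).IsQuadratic :=
  (quadraticChar_isQuadratic F).comp _

theorem quadraticChar_ringHomComp_sq {a : F} (ha : a ≠ 0) : φ (a ^ 2) = 1 := by
  rw [MulChar.ringHomComp_apply, quadraticChar_sq_one' ha, map_one]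

theorem quadraticChar_ringHomComp_inv (a : F) : φ a⁻¹ = φ a := by
  rw [← MulChar.inv_apply', isQuadratic_ringHomComp_quadraticChar.inv]

theorem quadraticChar_ringHomComp_ne_one (hF : ringChar F ≠ 2) : φ ≠ 1 :=
  (MulChar.ringHomComp_ne_one_iff Int.cast_injective).mpr (quadraticChar_ne_one hF)

theorem sum_comp_sq (hF : ringChar F ≠ 2) (f : F → ℂ) :
    ∑ x, f (x ^ 2) = ∑ t, (1 + φ t) * f t := by
  rw [← sum_fiberwise univ (· ^ 2) (fun x => f (x ^ 2))]
  refine sum_congr rfl fun t _ => ?_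
  rw [sum_congr rfl fun x hx => by rw [(mem_filter.1 hx).2], sum_const, nsmul_eq_mul]
  have hcard := quadraticChar_card_sqrts hF t
  rw [Set.toFinset_ofPred] at hcard
  rw [MulChar.ringHomComp_apply, eq_intCast, add_comm, ← Int.cast_one, ← Int.cast_add, ← hcard,
    Int.cast_natCast]

theorem sum_comp_mul_sq (hF : ringChar F ≠ 2) {a : F} (ha : a ≠ 0) (f : F → ℂ) :
    ∑ x, f (a * x ^ 2) = ∑ t, (1 + φ a * φ t) * f t := by
  rw [sum_comp_sq hF (fun u => f (a * u))]
  refine Fintype.sum_equiv (Equiv.mulLeft₀ a ha) _ _ fun u => ?_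
  simp only [Equiv.mulLeft₀_apply]
  rw [← map_mul, ← mul_assoc, ← sq, map_mul, quadraticChar_ringHomComp_sq ha, one_mul]

theorem sum_quadraticChar_ringHomComp_mul_sub (hF : ringChar F ≠ 2) (u : F) :
    ∑ s, φ s * φ (u - s) = φ (-1) * ((if u = 0 then q else 0) - 1) := by
  split_ifs with hu
  · calc ∑ s, φ s * φ (u - s) = φ (-1) * ∑ s, (φ ^ 2) s := by
          rw [mul_sum]; refine sum_congr rfl fun s _ => ?_
          rw [hu, zero_sub, neg_eq_neg_one_mul, map_mul, sq, MulChar.mul_apply]; ring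
      _ = φ (-1) * (q - 1) := by
          rw [isQuadratic_ringHomComp_quadraticChar.sq_eq_one, MulChar.sum_one_eq_card_units,
            Fintype.card_units, Nat.cast_sub Fintype.card_pos, Nat.cast_one]
  · calc ∑ s, φ s * φ (u - s) = ∑ t, φ t * φ (1 - t) := by
          refine (Fintype.sum_equiv (Equiv.mulLeft₀ u hu) _ _ fun t => ?_).symm
          have hu2 : φ u * φ u = 1 := by rw [← map_mul, ← sq, quadraticChar_ringHomComp_sq hu]
          simp only [Equiv.mulLeft₀_apply]
          rw [← mul_one_sub, map_mul, map_mul]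
          linear_combination (-(φ t * φ (1 - t))) * hu2
      _ = jacobiSum φ φ⁻¹ := by rw [isQuadratic_ringHomComp_quadraticChar.inv]; rfl
      _ = φ (-1) * (0 - 1) := by
          rw [jacobiSum_nontrivial_inv (quadraticChar_ringHomComp_ne_one hF)]; ring

theorem sum_sum_comp_mul_sq_add_mul_sq (hF : ringChar F ≠ 2) {a b : F} (ha : a ≠ 0) (hb : b ≠ 0)
    (f : F → ℂ) :
    ∑ x, ∑ y, f (a * x ^ 2 + b * y ^ 2) =
      (q - φ (-(a * b))) * ∑ t, f t + q * φ (-(a * b)) * f 0 := by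
  have hφ : ∑ s, φ s = 0 := MulChar.sum_eq_zero_of_ne_one (quadraticChar_ringHomComp_ne_one hF)
  -- `hweight u` is the number of solutions of `a x² + b y² = u`
  have hweight : ∀ u, ∑ s, (1 + φ a * φ s) * (1 + φ b * φ (u - s)) =
      q - φ (-(a * b)) + if u = 0 then q * φ (-(a * b)) else 0 := by
    intro u
    have hφ' : ∑ s, φ (u - s) = 0 :=
      (Fintype.sum_equiv (Equiv.subLeft u) _ _ fun _ => rfl).trans hφ
    have hexpand : ∀ s, (1 + φ a * φ s) * (1 + φ b * φ (u - s)) =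
        1 + φ a * φ s + φ b * φ (u - s) + φ a * φ b * (φ s * φ (u - s)) := fun s => by ring
    simp only [hexpand, sum_add_distrib, ← mul_sum, hφ, hφ',
      sum_quadraticChar_ringHomComp_mul_sub hF, sum_const, card_univ, nsmul_eq_mul, mul_one]
    rw [show -(a * b) = -1 * a * b by ring, map_mul, map_mul]
    split_ifs <;> ring
  calc ∑ x, ∑ y, f (a * x ^ 2 + b * y ^ 2)
      = ∑ x, ∑ t, (1 + φ b * φ t) * f (a * x ^ 2 + t) :=
        sum_congr rfl fun x _ => sum_comp_mul_sq hF hb fun t => f (a * x ^ 2 + t)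
    _ = ∑ t, ∑ s, (1 + φ a * φ s) * ((1 + φ b * φ t) * f (s + t)) := by
        rw [sum_comm]
        exact sum_congr rfl fun t _ => sum_comp_mul_sq hF ha fun s => (1 + φ b * φ t) * f (s + t)
    _ = ∑ s, ∑ u, (1 + φ a * φ s) * ((1 + φ b * φ (u - s)) * f u) := by
        rw [sum_comm]
        exact sum_congr rfl fun s _ =>
          Fintype.sum_equiv (Equiv.addLeft s) _ _ fun t => by simp
    _ = ∑ u, (q - φ (-(a * b)) + if u = 0 then q * φ (-(a * b)) else 0) * f u := by
        rw [sum_comm]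
        simp only [← hweight, sum_mul, mul_assoc]
    _ = (q - φ (-(a * b))) * ∑ t, f t + q * φ (-(a * b)) * f 0 := by
        simp only [add_mul, sum_add_distrib, ← mul_sum, ite_mul, zero_mul, sum_ite_eq',
          mem_univ, if_true]

theorem sum_sum_mulChar_sub_mul_sq_add_mul_sq (hF : ringChar F ≠ 2) (hη : η ≠ 1) {a b : F}
    (ha : a ≠ 0) (hb : b ≠ 0) (α : F) :
    ∑ x, ∑ y, η (α - (a * x ^ 2 + b * y ^ 2)) = q * φ (-(a * b)) * η α := by
  rw [sum_sum_comp_mul_sq_add_mul_sq hF ha hb (fun t => η (α - t)),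
    MulChar.sum_apply_sub_eq_zero hη, sub_zero, mul_zero, zero_add]

theorem sum_mulChar_sub_sum_mul_sq (hF : ringChar F ≠ 2) (hη : η ≠ 1) {k : ℕ}
    (c : Fin (2 * k) → F) (hc : ∀ i, c i ≠ 0) (z : F) :
    ∑ w : Fin (2 * k) → F, η (z - ∑ i, c i * w i ^ 2) =
      q ^ k * φ ((-1) ^ k * ∏ i, c i) * η z := by
  induction k generalizing z with
  | zero => simp
  | succ k ih =>
    revert c
    rw [show 2 * (k + 1) = 2 * k + 1 + 1 from rfl]
    intro c hc
    set c' : Fin (2 * k) → F := fun i => c i.succ.succ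
    have hsplit : ∀ x y (w : Fin (2 * k) → F),
        ∑ i, c i * (Fin.cons x (Fin.cons y w) : Fin (2 * k + 1 + 1) → F) i ^ 2 =
          (c 0 * x ^ 2 + c 1 * y ^ 2) + ∑ i, c' i * w i ^ 2 := by
      intro x y w
      simp only [Fin.sum_univ_succ, Fin.cons_zero, Fin.cons_succ, Fin.succ_zero_eq_one, c']
      ring
    have hprod : ∏ i, c i = c 0 * c 1 * ∏ i, c' i := by
      simp only [Fin.prod_univ_succ, Fin.succ_zero_eq_one, c', mul_assoc]
    calc ∑ w : Fin (2 * k + 1 + 1) → F, η (z - ∑ i, c i * w i ^ 2)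
        = ∑ x, ∑ y, ∑ w : Fin (2 * k) → F,
            η (z - ∑ i, c i * (Fin.cons x (Fin.cons y w) : Fin (2 * k + 1 + 1) → F) i ^ 2) := by
          simp only [Fintype.sum_fin_succ_pi (n := 2 * k + 1),
            Fintype.sum_fin_succ_pi (n := 2 * k)]
      _ = ∑ w : Fin (2 * k) → F, ∑ x, ∑ y,
            η ((z - ∑ i, c' i * w i ^ 2) - (c 0 * x ^ 2 + c 1 * y ^ 2)) := by
          rw [sum_congr rfl fun x _ => sum_comm, sum_comm]
          simp only [hsplit, sub_add_eq_sub_sub_swap]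
      _ = q * φ (-(c 0 * c 1)) * (q ^ k * φ ((-1) ^ k * ∏ i, c' i) * η z) := by
          simp only [sum_sum_mulChar_sub_mul_sq_add_mul_sq hF hη (hc 0) (hc 1), ← mul_sum,
            ih c' (fun i => hc _)]
      _ = q ^ (k + 1) * φ ((-1) ^ (k + 1) * ∏ i, c i) * η z := by
          rw [hprod, show (-1 : F) ^ (k + 1) * (c 0 * c 1 * ∏ i, c' i) =
            -(c 0 * c 1) * ((-1) ^ k * ∏ i, c' i) by ring, map_mul φ (-(c 0 * c 1))]
          ring

theorem sum_det_borderedMatrix_diagonal (hF : ringChar F ≠ 2) (hη : η ^ 2 ≠ 1) {k : ℕ}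
    (d : Fin (2 * k) → F) (z : F) :
    ∑ w, η (borderedMatrix (diagonal d) w z).det =
      q ^ k * φ ((-1) ^ k * ∏ i, d i) * η ((∏ i, d i) * z) := by
  by_cases hd : ∀ i, d i ≠ 0
  · have hη1 : η ≠ 1 := by rintro rfl; exact hη (one_pow 2)
    simp only [det_borderedMatrix_diagonal hd, map_mul, ← mul_sum]
    rw [sum_mulChar_sub_sum_mul_sq hF hη1 _ (fun i => inv_ne_zero (hd i)), prod_inv_distrib,
      map_mul φ _ (∏ i, d i)⁻¹, quadraticChar_ringHomComp_inv]
    ring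
  · obtain ⟨i, hi⟩ : ∃ i, d i = 0 := by simpa using hd
    -- rescaling the `i`-th coordinate by `a` fixes `diagonal d` but scales the sum by `η a ^ 2`
    obtain ⟨a, ha⟩ := MulChar.ne_one_iff.mp hη
    simp only [prod_eq_zero (mem_univ i) hi, mul_zero, zero_mul, MulChar.map_zero]
    have hdet : (diagonal (Pi.mulSingle i (a : F))).det = a := by
      simp [det_diagonal, prod_pi_mulSingle']
    refine sum_det_borderedMatrix_eq_zero_of_transpose_mul_mul_eq (hdet ▸ a.isUnit) ?_ ?_ z
    · rw [diagonal_transpose, diagonal_mul_diagonal, diagonal_mul_diagonal]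
      congr 1
      ext j
      rcases eq_or_ne j i with rfl | hj
      · simp [hi]
      · simp [hj]
    · rwa [hdet, ← MulChar.pow_apply' η two_ne_zero]

theorem sum_det_borderedMatrix (hF : ringChar F ≠ 2) (hη : η ^ 2 ≠ 1) {k : ℕ}
    {Z : Matrix (Fin (2 * k)) (Fin (2 * k)) F} (hZ : Z.IsSymm) (z : F) :
    ∑ w, η (borderedMatrix Z w z).det = q ^ k * φ ((-1) ^ k * Z.det) * η (Z.det * z) := by
  have : Invertible (2 : F) := invertibleOfNonzero (Ring.two_ne_zero hF)
  obtain ⟨U, hU, d, hUZ⟩ := hZ.exists_isUnit_det_transpose_mul_mul_eq_diagonal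
  have hdet : ∏ i, d i = U.det ^ 2 * Z.det := by
    rw [← det_diagonal, ← hUZ, det_mul, det_mul, det_transpose]; ring
  have h := sum_det_borderedMatrix_transpose_mul_mul η hU Z z
  rw [hUZ, sum_det_borderedMatrix_diagonal hF hη d z, hdet] at h
  refine mul_left_cancel₀ (pow_ne_zero 2 (hU.map η).ne_zero) ?_
  rw [← h, mul_left_comm _ (U.det ^ 2), map_mul φ (U.det ^ 2),
    quadraticChar_ringHomComp_sq hU.ne_zero, mul_assoc (U.det ^ 2), map_mul η (U.det ^ 2), map_pow]
  ring

end CharacterSums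

/-- Proposition 5.4 (2): for `p` an odd prime, `η` with `η² ≠ 1`, and `l` odd,
`∑_{w ∈ F_p^{l-1}} η(det [[Z₁, w],[wᵀ, z]])
  = p^((l-1)/2) φ((-1)^((l-1)/2) det Z₁) η(det Z₁ · z)`. -/
theorem charSum_borderedDet_odd (p l : ℕ) [Fact p.Prime] (hp : p ≠ 2)
    (η : MulChar (ZMod p) ℂ) (hη : η ^ 2 ≠ 1) (hl : Odd l)
    (Z₁ : Matrix (Fin (l - 1)) (Fin (l - 1)) (ZMod p)) (hZ₁ : Z₁ᵀ = Z₁) (z : ZMod p) :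
    (∑ w : Fin (l - 1) → ZMod p,
        η ((Matrix.fromBlocks Z₁ (Matrix.of fun i (_ : Unit) => w i)
            (Matrix.of fun (_ : Unit) j => w j) (Matrix.of fun _ _ => z)).det)) =
      (p : ℂ) ^ ((l - 1) / 2) *
        quadCharC p ((-1 : ZMod p) ^ ((l - 1) / 2) * Z₁.det) * η (Z₁.det * z) := by
  obtain ⟨k, rfl⟩ := hl
  rw [show (2 * k + 1 - 1) / 2 = k by omega,
    show (p : ℂ) = Fintype.card (ZMod p) by rw [ZMod.card]]
  exact sum_det_borderedMatrix ((ZMod.ringChar_zmod_n p).trans_ne hp) hη hZ₁ z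
end

section
/- Let p be an odd prime, m a positive integer, and χ a primitive Dirichlet character mod p. Let l = gcd(m, p-1) and u₀ a primitive l-th root of unity mod p. Let A ∈ S_m(F_p) and define K(A) = Σ_{c ∈ F_p} χ(c) · #{Z ∈ S_m(F_p) : det Z = 1 and tr(AZ) = c} (with the count taken of the appropriate twisted set M_p(A,c)). If χ(u₀) ≠ 1, then Σ_{c∈F_p^×} χ(c)·#M_p(A,c) = 0, where M_p(A,c) = {Z ∈ S_m(F_p) : det Z = 1, tr(AZ) = c}. -/
open Matrix Finset

/-!
Multiplying `Z` by a unit `u₀` with `u₀ ^ m = 1` preserves symmetry and `det Z`, and multiplies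
`tr (A Z)` by `u₀`; hence the count `#M_p(A, c)` is invariant under `c ↦ u₀ c`. Substituting
`c ↦ u₀ c` in `∑ χ(c) #M_p(A, c)` multiplies the sum by `χ(u₀) ≠ 1`, so it vanishes; the term
`c = 0` contributes nothing since `χ 0 = 0`.
-/

theorem card_symm_det_one_trace_mul_eq {n R : Type*} [Fintype n] [DecidableEq n] [CommRing R]
    [Fintype R] [DecidableEq R] (A : Matrix n n R) {u : Rˣ}
    (hu : u ^ Fintype.card n = 1) (c : R) :
    #{Z : Matrix n n R | Zᵀ = Z ∧ Z.det = 1 ∧ (A * Z).trace = u * c} =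
      #{Z : Matrix n n R | Zᵀ = Z ∧ Z.det = 1 ∧ (A * Z).trace = c} := by
  symm
  refine Finset.card_equiv (MulAction.toPerm u) fun Z => ?_
  have hdet : (u • Z).det = Z.det := by
    rw [Units.smul_def, det_smul, ← Units.val_pow_eq_pow_val, hu, Units.val_one, one_mul]
  have htr : (A * (u • Z)).trace = u * (A * Z).trace := by
    rw [Units.smul_def, Matrix.mul_smul, trace_smul, smul_eq_mul]
  simp only [mem_filter, mem_univ, true_and, MulAction.toPerm_apply]
  rw [transpose_smul, smul_left_cancel_iff, hdet, htr, Units.mul_right_inj]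

theorem MulChar.sum_mul_eq_zero_of_invariant {R R' : Type*} [CommRing R] [Fintype R]
    [CommRing R'] [IsDomain R'] (χ : MulChar R R') {u : Rˣ} (hχu : χ u ≠ 1) {f : R → R'}
    (hf : ∀ c, f (u * c) = f c) : ∑ c, χ c * f c = 0 := by
  have h : ∑ c, χ c * f c = χ u * ∑ c, χ c * f c := by
    calc ∑ c, χ c * f c = ∑ c, χ (u * c) * f (u * c) := (Equiv.sum_comp (Units.mulLeft u) _).symm
      _ = χ u * ∑ c, χ c * f c := by simp only [hf, map_mul, mul_sum, mul_assoc]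
  have : (χ u - 1) * ∑ c, χ c * f c = 0 := by linear_combination -h
  exact (mul_eq_zero.mp this).resolve_left (sub_ne_zero.mpr hχu)

theorem twisted_count_vanishes_general (p m : ℕ) [Fact p.Prime]
    (χ : MulChar (ZMod p) ℂ) (u₀ : (ZMod p)ˣ)
    (hu₀ : orderOf u₀ = Nat.gcd m (p - 1)) (hχu₀ : χ (u₀ : ZMod p) ≠ 1)
    (A : Matrix (Fin m) (Fin m) (ZMod p)) :
    (∑ c ∈ Finset.univ.erase (0 : ZMod p),
        χ c * ((Finset.univ.filter (fun Z : Matrix (Fin m) (Fin m) (ZMod p) =>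
          Zᵀ = Z ∧ Z.det = 1 ∧ (A * Z).trace = c)).card : ℂ)) = 0 := by
  have hu₀m : u₀ ^ Fintype.card (Fin m) = 1 := by
    rw [Fintype.card_fin, ← orderOf_dvd_iff_pow_eq_one, hu₀]
    exact Nat.gcd_dvd_left m (p - 1)
  rw [Finset.sum_erase _ (by rw [MulChar.map_zero, zero_mul])]
  refine χ.sum_mul_eq_zero_of_invariant hχu₀ fun c => ?_
  rw [card_symm_det_one_trace_mul_eq A hu₀m]

/-- Part of the proof of Theorem 5.5 (1): for `p` an odd prime, `χ` a nontrivial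
(primitive) character mod `p`, `l = gcd(m, p-1)`, and `u₀` a primitive `l`-th root of
unity mod `p` with `χ(u₀) ≠ 1`, the twisted count
`∑_{c ∈ F_p^×} χ(c) · #{Z ∈ S_m(F_p) : det Z = 1, tr(AZ) = c}` vanishes. -/
theorem twisted_count_vanishes (p m : ℕ) [Fact p.Prime] (hp : p ≠ 2) (hm : 0 < m)
    (χ : MulChar (ZMod p) ℂ) (hχ : χ ≠ 1) (u₀ : (ZMod p)ˣ)
    (hu₀ : orderOf u₀ = Nat.gcd m (p - 1)) (hχu₀ : χ (u₀ : ZMod p) ≠ 1)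
    (A : Matrix (Fin m) (Fin m) (ZMod p)) (hA : Aᵀ = A) :
    (∑ c ∈ Finset.univ.erase (0 : ZMod p),
        χ c * ((Finset.univ.filter (fun Z : Matrix (Fin m) (Fin m) (ZMod p) =>
          Zᵀ = Z ∧ Z.det = 1 ∧ (A * Z).trace = c)).card : ℂ)) = 0 :=
  twisted_count_vanishes_general p m χ u₀ hu₀ hχu₀ A
end

section
/- Let p be an odd prime, m an even positive integer, and χ a multiplicative character of F_p with χ ≠ 1 (extended by χ(0)=0). If A is a symmetric m×m matrix over F_p with det A = 0, then Σ_{X ∈ SL_m(F_p)} χ(tr(Xᵀ A X)) = 0. -/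
/-!
Write `S(d)` for the sum of `χ(tr(Xᵀ A X))` over the matrices `X` with `det X = d`.
Left multiplication `X ↦ U X` by an isometry `Uᵀ A U = A` gives `S(d) = S(det U · d)`, and
right multiplication `X ↦ X U₀` by a similitude `U₀ U₀ᵀ = α` scales the trace by `α`, so
`S(d · det U₀) = χ(α) S(d)`. Since `A` is symmetric and singular, `1 + v wᵀ` with `A v = 0` is
an isometry of any prescribed determinant, and since `m` is even and every `α ∈ 𝔽_p` is a sum
`a² + b²`, a similitude is given by copies of `[[a, b], [-b, a]]`. Comparing,
`S(1) = χ(α) S(1)` for every `α ≠ 0`.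
-/

open Matrix Finset

namespace Matrix

section DetFiber

variable {n R β : Type*} [Fintype n] [DecidableEq n] [CommRing R] [Fintype R] [DecidableEq R]
  [AddCommMonoid β]

theorem sum_filter_det_eq_comp_mul_left {U : Matrix n n R} (hU : IsUnit U.det)
    (f : Matrix n n R → β) (d : R) :
    ∑ X ∈ univ.filter (fun X : Matrix n n R => X.det = d), f (U * X) =
      ∑ X ∈ univ.filter (fun X : Matrix n n R => X.det = U.det * d), f X := by
  refine sum_equiv (Units.mulLeft ((isUnit_iff_isUnit_det U).mpr hU).unit) (fun X => ?_)
    (fun _ _ => rfl)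
  simp [det_mul, hU.mul_right_inj]

theorem sum_filter_det_eq_comp_mul_right {U : Matrix n n R} (hU : IsUnit U.det)
    (f : Matrix n n R → β) (d : R) :
    ∑ X ∈ univ.filter (fun X : Matrix n n R => X.det = d), f (X * U) =
      ∑ X ∈ univ.filter (fun X : Matrix n n R => X.det = d * U.det), f X := by
  refine sum_equiv (Units.mulRight ((isUnit_iff_isUnit_det U).mpr hU).unit) (fun X => ?_)
    (fun _ _ => rfl)
  simp [det_mul, hU.mul_left_inj]

end DetFiber

theorem trace_transpose_mul_mul_of_mul_transpose_eq_smul_one {n R : Type*} [Fintype n]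
    [DecidableEq n] [CommRing R] {U : Matrix n n R} {α : R} (hU : U * Uᵀ = α • 1)
    (B : Matrix n n R) : (Uᵀ * B * U).trace = α * B.trace := by
  rw [trace_mul_comm, ← Matrix.mul_assoc, hU, smul_mul, Matrix.one_mul, trace_smul, smul_eq_mul]

theorem exists_mul_transpose_eq_smul_one {R : Type*} [CommRing R] {m : ℕ} (hm : Even m)
    (a b : R) : ∃ U : Matrix (Fin m) (Fin m) R, U * Uᵀ = (a ^ 2 + b ^ 2) • 1 := by
  obtain ⟨k, rfl⟩ := hm
  let U : Matrix (Fin k ⊕ Fin k) (Fin k ⊕ Fin k) R :=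
    fromBlocks (a • 1) (b • 1) (-(b • 1)) (a • 1)
  have hU : U * Uᵀ = (a ^ 2 + b ^ 2) • 1 := by
    simp only [U, fromBlocks_transpose, fromBlocks_multiply, ← fromBlocks_one, fromBlocks_smul]
    congr 1 <;> simp [smul_smul, ← add_smul, sq, add_comm, mul_comm a b]
  refine ⟨reindex finSumFinEquiv finSumFinEquiv U, ?_⟩
  rw [transpose_reindex, reindex_apply, reindex_apply, submatrix_mul_equiv, hU]
  simp [submatrix_smul]

theorem exists_transpose_mul_mul_eq_self_and_det_eq {n K : Type*} [Fintype n]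
    [DecidableEq n] [Field K] {A : Matrix n n K} (hA : A.IsSymm) (hdet : A.det = 0) (c : K) :
    ∃ U : Matrix n n K, Uᵀ * A * U = A ∧ U.det = c := by
  obtain ⟨v, hv0, hAv⟩ := exists_mulVec_eq_zero_iff.mpr hdet
  obtain ⟨i, hi⟩ := Function.ne_iff.mp hv0
  have hvA : v ᵥ* A = 0 := by rw [← mulVec_transpose, hA, hAv]
  set U := 1 + replicateCol Unit v * replicateRow Unit (Pi.single i ((c - 1) / v i))
  have hAU : A * U = A := by
    rw [Matrix.mul_add, Matrix.mul_one, ← Matrix.mul_assoc, ← replicateCol_mulVec, hAv,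
      replicateCol_zero, Matrix.zero_mul, add_zero]
  have hUA : Uᵀ * A = A := by
    rw [transpose_add, transpose_one, transpose_mul, transpose_replicateCol,
      transpose_replicateRow, Matrix.add_mul, Matrix.one_mul, Matrix.mul_assoc,
      ← replicateRow_vecMul, hvA, replicateRow_zero, Matrix.mul_zero, add_zero]
  refine ⟨U, by rw [Matrix.mul_assoc, hAU, hUA], ?_⟩
  rw [det_one_add_replicateCol_mul_replicateRow, single_dotProduct, div_mul_cancel₀ _ hi]
  ring

section TraceCharSum

variable {n R M : Type*} [Fintype n] [DecidableEq n] [CommRing R] [Fintype R] [DecidableEq R]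
  [CommSemiring M]

def traceCharSum (χ : MulChar R M) (A : Matrix n n R) (d : R) : M :=
  ∑ X ∈ univ.filter (fun X : Matrix n n R => X.det = d), χ (Xᵀ * A * X).trace

theorem traceCharSum_det_mul {χ : MulChar R M} {A U : Matrix n n R} (hU : IsUnit U.det)
    (hUA : Uᵀ * A * U = A) (d : R) : traceCharSum χ A (U.det * d) = traceCharSum χ A d := by
  rw [traceCharSum, ← sum_filter_det_eq_comp_mul_left hU]
  refine sum_congr rfl fun X _ => ?_
  rw [show (U * X)ᵀ * A * (U * X) = Xᵀ * (Uᵀ * A * U) * X by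
    simp only [transpose_mul, Matrix.mul_assoc], hUA]

theorem traceCharSum_mul_det {χ : MulChar R M} {A U : Matrix n n R} {α : R}
    (hU : IsUnit U.det) (hUU : U * Uᵀ = α • 1) (d : R) :
    traceCharSum χ A (d * U.det) = χ α * traceCharSum χ A d := by
  rw [traceCharSum, ← sum_filter_det_eq_comp_mul_right hU, traceCharSum, mul_sum]
  refine sum_congr rfl fun X _ => ?_
  rw [← map_mul, ← trace_transpose_mul_mul_of_mul_transpose_eq_smul_one hUU]
  simp only [transpose_mul, Matrix.mul_assoc]

end TraceCharSum

end Matrix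

theorem h_sum_vanishes_of_singular_general (p m : ℕ) [Fact p.Prime] (hm : Even m)
    (χ : MulChar (ZMod p) ℂ) (hχ : χ ≠ 1)
    (A : Matrix (Fin m) (Fin m) (ZMod p)) (hA : Aᵀ = A) (hAdet : A.det = 0) :
    (∑ X ∈ Finset.univ.filter (fun X : Matrix (Fin m) (Fin m) (ZMod p) => X.det = 1),
        χ ((Xᵀ * A * X).trace)) = 0 := by
  obtain ⟨u, hu⟩ := MulChar.ne_one_iff.mp hχ
  obtain ⟨a, b, hab⟩ := ZMod.sq_add_sq p u
  obtain ⟨U₀, hU₀⟩ := exists_mul_transpose_eq_smul_one hm a b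
  rw [hab] at hU₀
  have hU₀unit : IsUnit U₀.det :=
    isUnit_det_of_right_inverse (B := (↑u⁻¹ : ZMod p) • U₀ᵀ) <| by
      rw [Matrix.mul_smul, hU₀, smul_smul, Units.inv_mul, one_smul]
  obtain ⟨U, hUA, hUdet⟩ := exists_transpose_mul_mul_eq_self_and_det_eq hA hAdet U₀.det
  have hUunit : IsUnit U.det := hUdet ▸ hU₀unit
  have hS : traceCharSum χ A 1 = χ u * traceCharSum χ A 1 :=
    calc traceCharSum χ A 1 = traceCharSum χ A (U.det * 1) :=
          (traceCharSum_det_mul hUunit hUA 1).symm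
      _ = traceCharSum χ A (1 * U₀.det) := by rw [hUdet, mul_one, one_mul]
      _ = χ u * traceCharSum χ A 1 := traceCharSum_mul_det hU₀unit hU₀ 1
  show traceCharSum χ A 1 = 0
  exact (mul_left_eq_self₀.mp hS.symm).resolve_left hu

/-- Part of the proof of Theorem 5.5: for `p` an odd prime, `m` even, `χ` a nontrivial
multiplicative character of `F_p`, and `A` a singular symmetric `m × m` matrix over
`F_p`, the sum `h(A,χ) = ∑_{X ∈ SL_m(F_p)} χ(tr(Xᵀ A X))` vanishes. -/
theorem h_sum_vanishes_of_singular (p m : ℕ) [Fact p.Prime] (hp : p ≠ 2) (hm : Even m)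
    (hm0 : 0 < m) (χ : MulChar (ZMod p) ℂ) (hχ : χ ≠ 1)
    (A : Matrix (Fin m) (Fin m) (ZMod p)) (hA : Aᵀ = A) (hAdet : A.det = 0) :
    (∑ X ∈ Finset.univ.filter (fun X : Matrix (Fin m) (Fin m) (ZMod p) => X.det = 1),
        χ ((Xᵀ * A * X).trace)) = 0 :=
  h_sum_vanishes_of_singular_general p m hm χ hχ A hA hAdet
end

section
/- Let p be an odd prime, l ≥ 2, η a multiplicative character of F_p with η² nontrivial, S₀ an invertible symmetric 1×1 matrix (a nonzero scalar s) over F_p, and S = s ⊕ O_{l-1} the l×l matrix of rank 1. Then for c ∈ F_p: Σ_{w ∈ F_p^l} η(s·w₁² + c) = p^{l-1} · J(η,φ) · φ(-s) · η(c) · φ(c), where φ is the quadratic character and J(η,φ) the Jacobi sum; in particular the sum is 0 when c = 0. -/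
open Finset

section FiniteField

variable {F R : Type*} [Field F] [CommRing R]

theorem MulChar.IsQuadratic.apply_neg_div {χ : MulChar F R} (hχ : χ.IsQuadratic) (s c : F) :
    χ (-(c / s)) = χ (-s) * χ c := by
  rw [← neg_div, div_eq_mul_inv, map_mul, ← inv_apply', hχ.inv, neg_eq_neg_one_mul,
    neg_eq_neg_one_mul s, map_mul, map_mul]
  ring

variable [Fintype F]

namespace MulChar

theorem sum_apply_mul_add_eq_zero [IsDomain R] {η : MulChar F R} (hη : η ≠ 1) {s : F}
    (hs : s ≠ 0) (c : F) :
    ∑ u, η (s * u + c) = 0 :=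
  (((Equiv.mulLeft₀ s hs).trans (Equiv.addRight c)).sum_comp η).trans (sum_eq_zero_of_ne_one hη)

theorem sum_mul_apply_mul_add_eq_jacobiSum (χ η : MulChar F R) {s c : F} (hs : s ≠ 0)
    (hc : c ≠ 0) :
    ∑ u, χ u * η (s * u + c) = χ (-(c / s)) * η c * jacobiSum χ η := by
  have hcs : -(c / s) ≠ 0 := neg_ne_zero.mpr (div_ne_zero hc hs)
  rw [← Equiv.sum_comp (Equiv.mulLeft₀ _ hcs), jacobiSum, mul_sum]
  refine Fintype.sum_congr _ _ fun t ↦ ?_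
  have harg : s * (-(c / s) * t) + c = c * (1 - t) := by field_simp; ring
  simp only [Equiv.mulLeft₀_apply, harg, map_mul]
  ring

theorem sum_mul_apply_mul_eq_zero [IsDomain R] {χ η : MulChar F R} (hχη : χ * η ≠ 1) (s : F) :
    ∑ u, χ u * η (s * u) = 0 := by
  simp_rw [map_mul, mul_left_comm (χ _), ← mul_sum, ← mul_apply, sum_eq_zero_of_ne_one hχη,
    mul_zero]

end MulChar

variable [DecidableEq F]

theorem sum_comp_sq_eq_sum_add_sum_quadraticChar_mul (hF : ringChar F ≠ 2) (f : F → R) :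
    ∑ x, f (x ^ 2) = ∑ u, f u + ∑ u, (quadraticChar F u : R) * f u := by
  rw [← Finset.sum_fiberwise' univ (· ^ 2) f, ← Finset.sum_add_distrib]
  refine Fintype.sum_congr _ _ fun u ↦ ?_
  have hcard : (#{x : F | x ^ 2 = u} : R) = 1 + quadraticChar F u := by
    have h := congrArg (Int.cast (R := R)) (quadraticChar_card_sqrts hF u)
    rw [Set.toFinset_ofPred] at h
    push_cast at h
    linear_combination h
  rw [sum_const, nsmul_eq_mul, hcard]
  ring

theorem sum_apply_mul_sq_add_eq_jacobiSum [IsDomain R] (hF : ringChar F ≠ 2)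
    {η : MulChar F R} (hη : η ^ 2 ≠ 1) {s : F} (hs : s ≠ 0) (c : F) :
    ∑ x, η (s * x ^ 2 + c) =
      jacobiSum η ((quadraticChar F).ringHomComp (Int.castRingHom R)) *
        (quadraticChar F).ringHomComp (Int.castRingHom R) (-s) * η c *
          (quadraticChar F).ringHomComp (Int.castRingHom R) c := by
  set φ := (quadraticChar F).ringHomComp (Int.castRingHom R)
  have hφ : φ.IsQuadratic := (quadraticChar_isQuadratic F).comp _
  have hη1 : η ≠ 1 := by rintro rfl; exact hη (one_pow 2)
  rw [sum_comp_sq_eq_sum_add_sum_quadraticChar_mul hF (fun u ↦ η (s * u + c)),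
    MulChar.sum_apply_mul_add_eq_zero hη1 hs, zero_add]
  change ∑ u, φ u * η (s * u + c) = _
  rcases eq_or_ne c 0 with rfl | hc
  · have hφη : φ * η ≠ 1 := by
      intro h
      rw [eq_inv_of_mul_eq_one_right h, hφ.inv] at hη
      exact hη hφ.sq_eq_one
    simp only [add_zero, MulChar.sum_mul_apply_mul_eq_zero hφη, MulChar.map_zero, mul_zero]
  · rw [MulChar.sum_mul_apply_mul_add_eq_jacobiSum φ η hs hc, hφ.apply_neg_div, jacobiSum_comm]
    ring

end FiniteField

/-- Rank-one odd case of Lemma 5.3: for `p` an odd prime, `η` with `η² ≠ 1`, `s ≠ 0`,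
`l ≥ 2` and `c ∈ F_p`,
`∑_{w ∈ F_p^l} η(s w₁² + c) = p^(l-1) J(η,φ) φ(-s) η(c) φ(c)`;
in particular the sum vanishes when `c = 0`. -/
theorem charSum_rank_one (p l : ℕ) [Fact p.Prime] (hp : p ≠ 2)
    (η : MulChar (ZMod p) ℂ) (hη : η ^ 2 ≠ 1) (hl : 2 ≤ l)
    (s : ZMod p) (hs : s ≠ 0) (c : ZMod p) :
    (∑ w : Fin l → ZMod p, η (s * (w ⟨0, by omega⟩) ^ 2 + c)) =
      (p : ℂ) ^ (l - 1) * jacobiSum η (quadCharC p) * quadCharC p (-s) *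
        η c * quadCharC p c := by
  have hF : ringChar (ZMod p) ≠ 2 := by rwa [ZMod.ringChar_zmod_n]
  rw [← Fintype.piFinset_univ, Fintype.sum_piFinset_apply (fun x ↦ η (s * x ^ 2 + c)),
    sum_apply_mul_sq_add_eq_jacobiSum hF hη hs c, card_univ, ZMod.card, Fintype.card_fin,
    nsmul_eq_mul, Nat.cast_pow, quadCharC]
  ring
end

section
/- Let p be an odd prime, η a nontrivial multiplicative character of F_p, and c ∈ F_p with c ≠ 0. Let s₁, s₂ ∈ F_p with s₁s₂ ≠ 0, so that S₀ = diag(s₁, s₂) is invertible (the case l = 2, r = 2). Then Σ_{(w₁,w₂) ∈ F_p²} η(s₁w₁² + s₂w₂² + c) = p · φ(-s₁s₂) · η(c). -/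
variable {p : ℕ} [Fact p.Prime]

lemma rc_ne_two (hp : p ≠ 2) : ringChar (ZMod p) ≠ 2 := by
  rw [ZMod.ringChar_zmod_n]; exact hp

lemma quadCharC_isQuadratic : (quadCharC p).IsQuadratic :=
  (quadraticChar_isQuadratic (ZMod p)).comp _

lemma quadCharC_ne_one (hp : p ≠ 2) : quadCharC p ≠ 1 := by
  obtain ⟨a, ha⟩ := quadraticChar_exists_neg_one (rc_ne_two hp)
  have ha0 : a ≠ 0 := by
    intro h; rw [h, MulChar.map_zero] at ha; exact absurd ha (by decide)
  intro h
  have h2 := congrArg (fun χ : MulChar (ZMod p) ℂ => χ a) h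
  simp only [quadCharC, MulChar.ringHomComp_apply, ha,
    MulChar.one_apply (Ne.isUnit ha0)] at h2
  norm_num at h2

lemma quadCharC_sq {a : ZMod p} (ha : a ≠ 0) : quadCharC p a * quadCharC p a = 1 := by
  have := quadraticChar_sq_one ha
  simp only [quadCharC, MulChar.ringHomComp_apply, ← Int.cast_mul, ← pow_two]
  rw [← map_pow, this, map_one]

lemma sum_sq_eq (hp : p ≠ 2) (f : ZMod p → ℂ) :
    ∑ w : ZMod p, f (w ^ 2) = ∑ a : ZMod p, (1 + quadCharC p a) * f a := by
  classical
  have key : ∀ a : ZMod p,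
      ((Finset.univ.filter fun w : ZMod p => w ^ 2 = a).card : ℂ) = 1 + quadCharC p a := by
    intro a
    have := quadraticChar_card_sqrts (rc_ne_two hp) a
    rw [Set.toFinset_setOf] at this
    have : ((Finset.univ.filter fun w : ZMod p => w ^ 2 = a).card : ℤ)
        = quadraticChar (ZMod p) a + 1 := this
    calc ((Finset.univ.filter fun w : ZMod p => w ^ 2 = a).card : ℂ)
        = (((Finset.univ.filter fun w : ZMod p => w ^ 2 = a).card : ℤ) : ℂ) := by push_cast; ring
      _ = ((quadraticChar (ZMod p) a + 1 : ℤ) : ℂ) := by rw [this]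
      _ = 1 + quadCharC p a := by
          simp [quadCharC, MulChar.ringHomComp_apply]; ring
  calc ∑ w : ZMod p, f (w ^ 2)
      = ∑ a : ZMod p, ∑ w ∈ Finset.univ.filter fun w : ZMod p => w ^ 2 = a, f (w ^ 2) :=
        (Finset.sum_fiberwise _ _ _).symm
    _ = ∑ a : ZMod p, ∑ w ∈ Finset.univ.filter fun w : ZMod p => w ^ 2 = a, f a := by
        apply Finset.sum_congr rfl; intro a _
        apply Finset.sum_congr rfl; intro w hw
        rw [(Finset.mem_filter.mp hw).2]
    _ = ∑ a : ZMod p, (1 + quadCharC p a) * f a := by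
        apply Finset.sum_congr rfl; intro a _
        rw [Finset.sum_const, nsmul_eq_mul, key]

lemma sum_affine (f : ZMod p → ℂ) (a b : ZMod p) (ha : a ≠ 0) :
    ∑ v : ZMod p, f (a * v + b) = ∑ t : ZMod p, f t :=
  Fintype.sum_equiv ((Equiv.mulLeft₀ a ha).trans (Equiv.addRight b)) _ _ (fun _ => rfl)

lemma inner_jacobi (hp : p ≠ 2) (s : ZMod p) :
    ∑ u : ZMod p, quadCharC p u * quadCharC p (s - u) =
      quadCharC p (-1) * (if s = 0 then (p : ℂ) - 1 else -1) := by
  set φ := quadCharC p with hφ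
  by_cases hs : s = 0
  · subst hs
    simp only [if_pos rfl, zero_sub]
    have h1 : ∀ u : ZMod p, φ u * φ (-u) = φ (-1) * (φ u * φ u) := by
      intro u
      have : (-u : ZMod p) = -1 * u := by ring
      rw [this, map_mul]; ring
    have h2 : ∀ u : ZMod p, φ u * φ u = if u = 0 then 0 else 1 := by
      intro u
      by_cases hu : u = 0
      · simp [hu, hφ, MulChar.map_zero]
      · rw [if_neg hu, quadCharC_sq hu]
    calc ∑ u : ZMod p, φ u * φ (-u) = ∑ u : ZMod p, φ (-1) * (φ u * φ u) := by
          simp only [h1]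
      _ = φ (-1) * ∑ u : ZMod p, (if u = 0 then (0:ℂ) else 1) := by
          rw [Finset.mul_sum]; simp only [h2]
      _ = φ (-1) * ((p : ℂ) - 1) := by
          congr 1
          have h3 : ∀ u : ZMod p, (if u = 0 then (0:ℂ) else 1)
              = 1 - (if u = 0 then 1 else 0) := by
            intro u; split <;> norm_num
          simp only [h3]
          rw [Finset.sum_sub_distrib, Finset.sum_const, Finset.card_univ, ZMod.card,
            Finset.sum_ite_eq' Finset.univ (0 : ZMod p) (fun _ => (1:ℂ))]
          simp
  · rw [if_neg hs]
    have hinv : (quadCharC p)⁻¹ = quadCharC p := quadCharC_isQuadratic.inv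
    have hJ : jacobiSum φ φ = -φ (-1) := by
      have h : jacobiSum (quadCharC p) (quadCharC p)⁻¹ = -(quadCharC p) (-1) :=
        jacobiSum_nontrivial_inv (quadCharC_ne_one hp)
      rwa [hinv] at h
    calc ∑ u : ZMod p, φ u * φ (s - u)
        = ∑ x : ZMod p, φ (s * x) * φ (s - s * x) := by
          exact (Fintype.sum_equiv (Equiv.mulLeft₀ s hs)
            (fun x => φ (s * x) * φ (s - s * x)) (fun u => φ u * φ (s - u))
            (fun x => rfl)).symm ▸ rfl
      _ = ∑ x : ZMod p, (φ s * φ s) * (φ x * φ (1 - x)) := by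
          apply Finset.sum_congr rfl; intro x _
          have h1 : s - s * x = s * (1 - x) := by ring
          rw [h1, map_mul, map_mul]; ring
      _ = (φ s * φ s) * jacobiSum φ φ := by rw [← Finset.mul_sum]; rfl
      _ = -φ (-1) := by rw [quadCharC_sq hs, hJ, one_mul]
      _ = φ (-1) * -1 := by ring

lemma sumA (hp : p ≠ 2) {η : MulChar (ZMod p) ℂ} (hη : η ≠ 1) (c : ZMod p) :
    ∑ u : ZMod p, ∑ v : ZMod p, quadCharC p u * (quadCharC p v * η (u + v + c)) =
      (p : ℂ) * quadCharC p (-1) * η c := by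
  set φ := quadCharC p with hφ
  have hηz : ∑ t : ZMod p, η t = 0 := η.sum_eq_zero_of_ne_one hη
  calc ∑ u : ZMod p, ∑ v : ZMod p, φ u * (φ v * η (u + v + c))
      = ∑ u : ZMod p, ∑ s : ZMod p, φ u * (φ (s - u) * η (s + c)) := by
        apply Finset.sum_congr rfl; intro u _
        refine (Fintype.sum_equiv (Equiv.subRight u)
          (fun s => φ u * (φ (s - u) * η (s + c)))
          (fun v => φ u * (φ v * η (u + v + c))) fun s => ?_).symm
        simp only [Equiv.subRight_apply]
        congr 2
        ring
    _ = ∑ s : ZMod p, (∑ u : ZMod p, φ u * φ (s - u)) * η (s + c) := by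
        rw [Finset.sum_comm]
        apply Finset.sum_congr rfl; intro s _
        rw [Finset.sum_mul]
        apply Finset.sum_congr rfl; intro u _
        ring
    _ = ∑ s : ZMod p, (φ (-1) * (if s = 0 then (p : ℂ) - 1 else -1)) * η (s + c) := by
        simp only [hφ, inner_jacobi hp]
    _ = φ (-1) * ∑ s : ZMod p, ((p : ℂ) * (if s = 0 then 1 else 0) - 1) * η (s + c) := by
        rw [Finset.mul_sum]
        apply Finset.sum_congr rfl; intro s _
        split <;> ring
    _ = φ (-1) * ((p : ℂ) * ∑ s : ZMod p, (if s = 0 then 1 else 0) * η (s + c)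
          - ∑ s : ZMod p, η (s + c)) := by
        congr 1
        rw [Finset.mul_sum, ← Finset.sum_sub_distrib]
        apply Finset.sum_congr rfl; intro s _
        ring
    _ = (p : ℂ) * φ (-1) * η c := by
        have h1 : ∑ s : ZMod p, (if s = 0 then (1:ℂ) else 0) * η (s + c) = η c := by
          rw [Finset.sum_eq_single (0 : ZMod p)]
          · simp
          · intro b _ hb; rw [if_neg hb, zero_mul]
          · intro h; exact absurd (Finset.mem_univ _) h
        have h2 : ∑ s : ZMod p, η (s + c) = 0 := by
          have := sum_affine (fun t => η t) 1 c one_ne_zero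
          simp only [one_mul] at this
          rw [this, hηz]
        rw [h1, h2]
        ring


/-- Rank-two (even rank) instance of Lemma 5.3: for `p` an odd prime, `η` a nontrivial
multiplicative character, `s₁ s₂ ≠ 0` and `c ≠ 0`,
`∑_{(w₁,w₂) ∈ F_p²} η(s₁ w₁² + s₂ w₂² + c) = p · φ(-s₁ s₂) · η(c)`. -/
theorem charSum_rank_two (p : ℕ) [Fact p.Prime] (hp : p ≠ 2)
    (η : MulChar (ZMod p) ℂ) (hη : η ≠ 1) (s₁ s₂ : ZMod p) (hs₁ : s₁ ≠ 0)
    (hs₂ : s₂ ≠ 0) (c : ZMod p) (hc : c ≠ 0) :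
    (∑ w : ZMod p × ZMod p, η (s₁ * w.1 ^ 2 + s₂ * w.2 ^ 2 + c)) =
      (p : ℂ) * quadCharC p (-(s₁ * s₂)) * η c := by
  set φ := quadCharC p with hφ
  have hz2 : ∀ b : ZMod p, ∑ v : ZMod p, η (s₂ * v + b) = 0 := fun b => by
    rw [sum_affine (fun t => η t) s₂ b hs₂]; exact η.sum_eq_zero_of_ne_one hη
  have hz1 : ∀ b : ZMod p, ∑ u : ZMod p, η (s₁ * u + b) = 0 := fun b => by
    rw [sum_affine (fun t => η t) s₁ b hs₁]; exact η.sum_eq_zero_of_ne_one hη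
  have step1 : (∑ w : ZMod p × ZMod p, η (s₁ * w.1 ^ 2 + s₂ * w.2 ^ 2 + c))
      = ∑ u : ZMod p, (1 + φ u) * ∑ v : ZMod p, (1 + φ v) * η (s₁ * u + s₂ * v + c) := by
    rw [Fintype.sum_prod_type]
    rw [sum_sq_eq hp (fun x => ∑ w₂ : ZMod p, η (s₁ * x + s₂ * w₂ ^ 2 + c))]
    apply Finset.sum_congr rfl; intro u _
    congr 1
    exact sum_sq_eq hp (fun y => η (s₁ * u + s₂ * y + c))
  rw [step1]
  have expand : ∀ u v : ZMod p, (1 + φ u) * ((1 + φ v) * η (s₁ * u + s₂ * v + c))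
      = η (s₁ * u + s₂ * v + c) + φ u * η (s₁ * u + s₂ * v + c)
        + φ v * η (s₁ * u + s₂ * v + c) + φ u * (φ v * η (s₁ * u + s₂ * v + c)) := by
    intros; ring
  have hre : ∀ u v : ZMod p, s₁ * u + s₂ * v + c = s₂ * v + (s₁ * u + c) := by
    intros; ring
  calc ∑ u : ZMod p, (1 + φ u) * ∑ v : ZMod p, (1 + φ v) * η (s₁ * u + s₂ * v + c)
      = ∑ u : ZMod p, ∑ v : ZMod p,
          (η (s₁ * u + s₂ * v + c) + φ u * η (s₁ * u + s₂ * v + c)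
            + φ v * η (s₁ * u + s₂ * v + c) + φ u * (φ v * η (s₁ * u + s₂ * v + c))) := by
        apply Finset.sum_congr rfl; intro u _
        rw [Finset.mul_sum]
        exact Finset.sum_congr rfl fun v _ => expand u v
    _ = (∑ u : ZMod p, ∑ v : ZMod p, η (s₁ * u + s₂ * v + c))
        + (∑ u : ZMod p, ∑ v : ZMod p, φ u * η (s₁ * u + s₂ * v + c))
        + (∑ u : ZMod p, ∑ v : ZMod p, φ v * η (s₁ * u + s₂ * v + c))
        + ∑ u : ZMod p, ∑ v : ZMod p, φ u * (φ v * η (s₁ * u + s₂ * v + c)) := by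
        simp only [Finset.sum_add_distrib]
    _ = ∑ u : ZMod p, ∑ v : ZMod p, φ u * (φ v * η (s₁ * u + s₂ * v + c)) := by
        have t1 : ∑ u : ZMod p, ∑ v : ZMod p, η (s₁ * u + s₂ * v + c) = 0 := by
          apply Finset.sum_eq_zero; intro u _
          simp only [hre u]
          exact hz2 _
        have t2 : ∑ u : ZMod p, ∑ v : ZMod p, φ u * η (s₁ * u + s₂ * v + c) = 0 := by
          apply Finset.sum_eq_zero; intro u _
          rw [← Finset.mul_sum]
          simp only [hre u]
          rw [hz2 _, mul_zero]
        have t3 : ∑ u : ZMod p, ∑ v : ZMod p, φ v * η (s₁ * u + s₂ * v + c) = 0 := by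
          rw [Finset.sum_comm]
          apply Finset.sum_eq_zero; intro v _
          have hre' : ∀ i : ZMod p, s₁ * i + s₂ * v + c = s₁ * i + (s₂ * v + c) :=
            fun i => by ring
          simp only [hre']
          rw [← Finset.mul_sum, hz1 _, mul_zero]
        rw [t1, t2, t3]; ring
    _ = ∑ x : ZMod p, ∑ y : ZMod p,
          φ (s₁⁻¹ * x) * (φ (s₂⁻¹ * y) * η (x + y + c)) := by
        refine Fintype.sum_equiv (Equiv.mulLeft₀ s₁ hs₁) _ _ fun u => ?_
        refine Fintype.sum_equiv (Equiv.mulLeft₀ s₂ hs₂) _ _ fun v => ?_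
        show φ u * (φ v * η (s₁ * u + s₂ * v + c))
          = φ (s₁⁻¹ * (s₁ * u)) * (φ (s₂⁻¹ * (s₂ * v)) * η (s₁ * u + s₂ * v + c))
        rw [inv_mul_cancel_left₀ hs₁, inv_mul_cancel_left₀ hs₂]
    _ = (φ s₁⁻¹ * φ s₂⁻¹) * ∑ x : ZMod p, ∑ y : ZMod p, φ x * (φ y * η (x + y + c)) := by
        rw [Finset.mul_sum]
        apply Finset.sum_congr rfl; intro x _
        rw [Finset.mul_sum]
        apply Finset.sum_congr rfl; intro y _
        rw [map_mul, map_mul]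
        ring
    _ = (p : ℂ) * φ (-(s₁ * s₂)) * η c := by
        rw [sumA hp hη c]
        have hi1 : φ s₁⁻¹ = φ s₁ := by
          have h1 : φ s₁⁻¹ * φ s₁ = 1 := by
            rw [← map_mul, inv_mul_cancel₀ hs₁, map_one]
          have h2 := quadCharC_sq hs₁
          calc φ s₁⁻¹ = φ s₁⁻¹ * (φ s₁ * φ s₁) := by rw [h2, mul_one]
            _ = (φ s₁⁻¹ * φ s₁) * φ s₁ := by ring
            _ = φ s₁ := by rw [h1, one_mul]
        have hi2 : φ s₂⁻¹ = φ s₂ := by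
          have h1 : φ s₂⁻¹ * φ s₂ = 1 := by
            rw [← map_mul, inv_mul_cancel₀ hs₂, map_one]
          have h2 := quadCharC_sq hs₂
          calc φ s₂⁻¹ = φ s₂⁻¹ * (φ s₂ * φ s₂) := by rw [h2, mul_one]
            _ = (φ s₂⁻¹ * φ s₂) * φ s₂ := by ring
            _ = φ s₂ := by rw [h1, one_mul]
        have hneg : φ (-(s₁ * s₂)) = φ (-1) * (φ s₁ * φ s₂) := by
          have : (-(s₁ * s₂) : ZMod p) = -1 * (s₁ * s₂) := by ring
          rw [this, map_mul, map_mul]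
        rw [hi1, hi2, hneg]
        ring
end
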